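/- Let A = (E, ≤, ↗, λ) be an asymmetric event structure, X ⊆ E a combinable set of events, A/X its folding and f : E → E/X the folding morphism. Then for all e, e' ∈ E, if e ↗_μ e' (the asymmetric conflict is direct) then f(e) ↗/X f(e') or e # e'. -/

import Mathlib

/-- Restriction of a binary relation to a set. -/
def RelRestrict {G : Type*} (r : G → G → Prop) (S : Set G) : G → G → Prop :=
  fun a b => a ∈ S ∧ b ∈ S ∧ r a b

/-- A binary relation is acyclic on a set: there is no cycle lying within the set. -/
def AcyclicOn {G : Type*} (r : G → G → Prop) (S : Set G) : Prop :=
  ∀ x, ¬ Relation.TransGen (RelRestrict r S) x x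

/-- The data of a labelled asymmetric event structure (AES). -/
structure AES (E : Type*) (Λ : Type*) where
  le : E → E → Prop
  ac : E → E → Prop
  lab : E → Λ

namespace AES

variable {E : Type*} {Λ : Type*}

/-- Strict causality. -/
def lt (A : AES E Λ) (e e' : E) : Prop := A.le e e' ∧ e ≠ e'

/-- The set of causes `⌊e⌋`. -/
def causes (A : AES E Λ) (e : E) : Set E := {e' | A.le e' e}

/-- `⌊Y⌋`, the causes of a set of events. -/
def causesSet (A : AES E Λ) (Y : Set E) : Set E := ⋃ y ∈ Y, A.causes y

/-- The axioms making the data an asymmetric event structure. -/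
structure IsAES (A : AES E Λ) : Prop where
  le_refl : ∀ e, A.le e e
  le_trans : ∀ e e' e'', A.le e e' → A.le e' e'' → A.le e e''
  le_antisymm : ∀ e e', A.le e e' → A.le e' e → e = e'
  causes_finite : ∀ e, (A.causes e).Finite
  lt_ac : ∀ e e', A.lt e e' → A.ac e e'
  ac_heredity : ∀ e e' e'', A.ac e e' → A.lt e' e'' → A.ac e e''
  ac_acyclic : ∀ e, AcyclicOn A.ac (A.causes e)
  cyclic_ac : ∀ e e', ¬ AcyclicOn A.ac (A.causes e ∪ A.causes e') → A.ac e e'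

/-- Conflict on sets of events, inductively generated from cycles of asymmetric
conflict and closed under hereditarity along causality. -/
inductive SetConflict (A : AES E Λ) : Set E → Prop
  | cycle (e : E) (l : List E) : List.Chain A.ac e (l ++ [e]) →
      SetConflict A {x | x ∈ e :: l}
  | heredity (Y : Set E) (e e' : E) :
      SetConflict A (Y ∪ {e}) → A.le e e' → SetConflict A (Y ∪ {e'})

/-- Binary conflict `e # e'`. -/
def Conflict (A : AES E Λ) (e e' : E) : Prop := A.SetConflict {e, e'}

/-- A set of events is consistent if it contains no two events in conflict. -/
def ConsistentSet (A : AES E Λ) (Y : Set E) : Prop :=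
  ∀ e ∈ Y, ∀ e' ∈ Y, ¬ A.Conflict e e'

/-- Immediate causality `e' <_μ e`. -/
def ltMu (A : AES E Λ) (e' e : E) : Prop :=
  A.lt e' e ∧ ¬ ∃ e'', A.lt e' e'' ∧ A.lt e'' e

/-- Direct asymmetric conflict `e ↗_μ e''`. -/
def acMu (A : AES E Λ) (e e'' : E) : Prop :=
  A.ac e e'' ∧ ¬ ∃ e', A.ac e e' ∧ A.lt e' e''

/-- Direct binary conflict `e #_μ e'`. -/
def confMu (A : AES E Λ) (e e' : E) : Prop := A.acMu e e' ∧ A.acMu e' e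

/-- Configurations: finite, causally closed and free of asymmetric-conflict cycles. -/
def Config (A : AES E Λ) (C : Set E) : Prop :=
  C.Finite ∧ (∀ e ∈ C, A.causes e ⊆ C) ∧ AcyclicOn A.ac C

/-- Similar sets of events. -/
def Similar (A : AES E Λ) (X : Set E) : Prop :=
  ∀ e ∈ X, ∀ e' ∈ X,
    A.lab e = A.lab e' ∧ (e ≠ e' → A.Conflict e e') ∧
    ∀ e'', e'' ∉ X →
      (A.ac e e'' → (A.ac e' e'' ∨ A.ac e'' e)) ∧
      (A.acMu e'' e → A.ac e'' e')

/-- The strict causes `S(X)`. -/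
def strictCauses (A : AES E Λ) (X : Set E) : Set E := {e' | ∀ e ∈ X, A.lt e' e}

/-- The weak predecessors `W(X)`. -/
def weakPred (A : AES E Λ) (X : Set E) : Set E :=
  {e'' | ∃ e ∈ X, ∃ e' ∈ X, A.ac e'' e ∧ ¬ A.ac e' e''} \ (A.strictCauses X ∪ X)

/-- The history `C⟦e⟧` of `e` in a configuration `C`. -/
def history (A : AES E Λ) (C : Set E) (e : E) : Set E :=
  {e' | e' ∈ C ∧ Relation.ReflTransGen (RelRestrict A.ac C) e' e}

/-- The set of possible histories of `e`. -/
def Hist (A : AES E Λ) (e : E) : Set (Set E) :=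
  {h | ∃ C, A.Config C ∧ e ∈ C ∧ h = A.history C e}

/-- Combinable sets of events. -/
def Combinable (A : AES E Λ) (X : Set E) : Prop :=
  A.Similar X ∧
  ∀ Y, Y ⊆ A.weakPred X → A.ConsistentSet Y →
    ∃ e ∈ X, (∀ e' ∈ Y, ¬ A.ac e e') ∧
      ∃ h ∈ A.Hist e, h \ {e} ⊆ A.strictCauses X ∪ A.causesSet Y

/-- The carrier of the folded structure: `(E \ X) ∪ {e_X}`, where the fresh
event `e_X` is encoded as `none`. -/
def foldCarrier (X : Set E) : Set (Option E) :=
  {x | x = none ∨ ∃ e, e ∉ X ∧ x = some e}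

/-- Causality of the folded structure. -/
def foldLe (A : AES E Λ) (X : Set E) : Option E → Option E → Prop
  | some e, some e' => e ∉ X ∧ e' ∉ X ∧ A.le e e'
  | some e, none => e ∈ A.strictCauses X
  | none, some e => e ∉ X ∧ ∃ e' ∈ X, A.lt e' e
  | none, none => True

/-- Asymmetric conflict of the folded structure. -/
def foldAc (A : AES E Λ) (X : Set E) : Option E → Option E → Prop
  | some e, some e' => e ∉ X ∧ e' ∉ X ∧ A.ac e e'
  | some e', none => e' ∉ X ∧ ∀ e ∈ X, A.ac e' e
  | none, some e' => e' ∉ X ∧ ∀ e ∈ X, A.ac e e'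
  | none, none => False

open Classical in
/-- Labelling of the folded structure. -/
noncomputable def foldLab [Inhabited Λ] (A : AES E Λ) (X : Set E) : Option E → Λ
  | some e => A.lab e
  | none => if h : X.Nonempty then A.lab h.some else default

open Classical in
/-- The folding morphism `f : E → E/X`. -/
noncomputable def foldMap (X : Set E) : E → Option E :=
  fun e => if e ∈ X then none else some e

end AES

/-!
Split on whether `e` and `e'` lie in `X`. Outside `X` the conflict is kept verbatim. Two events of
`X` are equal or in conflict by similarity. For `e ∈ X`, similarity gives `e₀ ↗ e'` for every
`e₀ ∈ X` unless `e' ↗ e`, and then `e ↗ e' ↗ e` is a conflict cycle. For `e' ∈ X` it is the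
directness of `e ↗ e'` that lets similarity transfer it to every `e₀ ∈ X`.
-/

namespace AES

variable {E Λ : Type*} {A : AES E Λ} {X : Set E} {e e' e'' : E}

theorem conflict_of_ac_of_ac (h : A.ac e e') (h' : A.ac e' e) : A.Conflict e e' := by
  have hpair : ({e, e'} : Set E) = {x | x ∈ [e, e']} := by ext; simp
  rw [Conflict, hpair]
  exact .cycle e [e'] (.cons_cons h (.cons_cons h' (.singleton e)))

theorem Similar.conflict_of_ac (hS : A.Similar X) (he : e ∈ X) (he' : e' ∈ X)
    (h : A.ac e e') : A.Conflict e e' := by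
  by_cases heq : e = e'
  · subst heq
    exact conflict_of_ac_of_ac h h
  · exact (hS e he e' he').2.1 heq

theorem Similar.ac_or_ac (hS : A.Similar X) (he : e ∈ X) (he' : e' ∈ X) (he'' : e'' ∉ X)
    (h : A.ac e e'') : A.ac e' e'' ∨ A.ac e'' e :=
  ((hS e he e' he').2.2 e'' he'').1 h

theorem Similar.ac_of_acMu (hS : A.Similar X) (he : e ∈ X) (he' : e' ∈ X) (he'' : e'' ∉ X)
    (h : A.acMu e'' e) : A.ac e'' e' :=
  ((hS e he e' he').2.2 e'' he'').2 h

theorem foldMap_of_mem (he : e ∈ X) : foldMap X e = none := if_pos he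

theorem foldMap_of_notMem (he : e ∉ X) : foldMap X e = some e := if_neg he

end AES

open AES in
theorem aes_folding_preserves_direct_asymmetric_conflict_general
    {E Λ : Type*} (A : AES E Λ) (X : Set E) (hX : A.Combinable X)
    (e e' : E) (h : A.acMu e e') :
    A.foldAc X (foldMap X e) (foldMap X e') ∨ A.Conflict e e' := by
  have hS : A.Similar X := hX.1
  by_cases he : e ∈ X <;> by_cases he' : e' ∈ X
  · exact Or.inr (hS.conflict_of_ac he he' h.1)
  · by_cases hback : A.ac e' e
    · exact Or.inr (conflict_of_ac_of_ac h.1 hback)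
    · left
      rw [foldMap_of_mem he, foldMap_of_notMem he']
      exact ⟨he', fun e₀ he₀ => (hS.ac_or_ac he he₀ he' h.1).resolve_right hback⟩
  · left
    rw [foldMap_of_notMem he, foldMap_of_mem he']
    exact ⟨he, fun e₀ he₀ => hS.ac_of_acMu he' he₀ he h⟩
  · left
    rw [foldMap_of_notMem he, foldMap_of_notMem he']
    exact ⟨he, he', h.1⟩

open AES in
/-- direct asymmetric conflicts are either preserved by the
folding morphism or the two events are in conflict. -/
theorem aes_folding_preserves_direct_asymmetric_conflict
    {E Λ : Type*} (A : AES E Λ) (hA : A.IsAES) (X : Set E) (hX : A.Combinable X)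
    (e e' : E) (h : A.acMu e e') :
    A.foldAc X (foldMap X e) (foldMap X e') ∨ A.Conflict e e' :=
  aes_folding_preserves_direct_asymmetric_conflict_general A X hX e e' h
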